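/- Let M be a free abelian group of finite rank, V and W subgroups of M, and φ : V → W a group isomorphism. For every integer k ≥ 1, let V_k = { v ∈ V : φ^j(v) ∈ V for all 0 ≤ j < k } and let φ^k : V_k → φ^k(V_k) be the k-fold composite of φ, a group isomorphism onto its image. Then D_{φ^k} = D_φ and the associated automorphism satisfies (φ^k)~ = (φ̃)^k; moreover D_{φ^{-1}} = D_φ and (φ^{-1})~ = (φ̃)^{-1}. -/

import Mathlib

/-!
Setting: `M = ℤ^n` is a free abelian group of finite rank, `V, W` are subgroups of `M`,
and `φ : V ≃+ W` is a group isomorphism.  Inside `M ⊗ ℚ = ℚ^n`, a subgroup `U` of `M`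
is identified with the `ℚ`-subspace `U ⊗ ℚ` spanned by its image, and `φ_ℚ` denotes the
unique `ℚ`-linear extension of `φ` to `V ⊗ ℚ`.
-/

/-- The canonical embedding of `ℤ^n` into `ℚ^n` (i.e. `M → M ⊗ ℚ`). -/
def embQ (n : ℕ) (x : Fin n → ℤ) : Fin n → ℚ := fun i => (x i : ℚ)

/-- `U ⊗ ℚ`, the `ℚ`-subspace of `ℚ^n` spanned by the image of a subgroup `U` of `ℤ^n`. -/
def qSpan (n : ℕ) (U : AddSubgroup (Fin n → ℤ)) : Submodule ℚ (Fin n → ℚ) :=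
  Submodule.span ℚ (embQ n '' (U : Set (Fin n → ℤ)))

/-- `RelQ V W φ x y` expresses that `x ∈ V ⊗ ℚ` and `φ_ℚ (x) = y`, where `φ_ℚ` is the
unique `ℚ`-linear extension of `φ : V ≃+ W`: there is a nonzero integer `p` clearing the
denominators of `x`, with `p • x ∈ V` and `φ (p • x) = p • y`. -/
def RelQ {n : ℕ} (V W : AddSubgroup (Fin n → ℤ)) (φ : V ≃+ W)
    (x y : Fin n → ℚ) : Prop :=
  ∃ p : ℤ, p ≠ 0 ∧ ∃ v : V, embQ n (v : Fin n → ℤ) = p • x ∧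
    embQ n ((φ v : W) : Fin n → ℤ) = p • y

/-- `D_φ`: the set of `x ∈ (V ∩ W) ⊗ ℚ` admitting a full backward orbit
`(x_k)_{k ≥ 0}` under `φ_ℚ` inside `(V ∩ W) ⊗ ℚ`, i.e. `x_0 = x` and
`φ_ℚ (x_{k+1}) = x_k` for all `k`. -/
def DSet {n : ℕ} (V W : AddSubgroup (Fin n → ℤ)) (φ : V ≃+ W) : Set (Fin n → ℚ) :=
  {x | ∃ xs : ℕ → (Fin n → ℚ), xs 0 = x ∧ (∀ k, xs k ∈ qSpan n (V ⊓ W)) ∧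
      ∀ k, RelQ V W φ (xs (k + 1)) (xs k)}


/-- `IntRel V W φ v w`: `v ∈ V` and `φ (v) = w` (as elements of `M = ℤ^n`). -/
def IntRel {n : ℕ} (V W : AddSubgroup (Fin n → ℤ)) (φ : V ≃+ W)
    (v w : Fin n → ℤ) : Prop :=
  ∃ hv : v ∈ V, ((φ ⟨v, hv⟩ : W) : Fin n → ℤ) = w

/-- `IntRelIter V W φ k v w`: the `k`-th iterate of `φ` is defined at `v` (i.e. `v ∈ V_k`,
that is `φ^j (v) ∈ V` for all `0 ≤ j < k`) and `φ^k (v) = w`.  In particular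
`V_k = {v | ∃ w, IntRelIter V W φ k v w}` and `W_k = φ^k (V_k) = {w | ∃ v, IntRelIter V W φ k v w}`. -/
def IntRelIter {n : ℕ} (V W : AddSubgroup (Fin n → ℤ)) (φ : V ≃+ W) :
    ℕ → (Fin n → ℤ) → (Fin n → ℤ) → Prop
  | 0, v, w => v = w
  | (k + 1), v, w => ∃ u, IntRel V W φ v u ∧ IntRelIter V W φ k u w

/-- `RelPowQ V W φ k x y`: `x ∈ V_k ⊗ ℚ` and `(φ^k)_ℚ (x) = y`, where `φ^k : V_k → W_k`
is the `k`-fold composite of `φ`. -/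
def RelPowQ {n : ℕ} (V W : AddSubgroup (Fin n → ℤ)) (φ : V ≃+ W) (k : ℕ)
    (x y : Fin n → ℚ) : Prop :=
  ∃ p : ℤ, p ≠ 0 ∧ ∃ v w : Fin n → ℤ, IntRelIter V W φ k v w ∧
    embQ n v = p • x ∧ embQ n w = p • y

/-- `x ∈ (V_k ⊓ W_k) ⊗ ℚ`, where `V_k` is the domain of `φ^k` and `W_k = φ^k (V_k)` is
the domain of `φ^{-k}`. -/
def memDomQ {n : ℕ} (V W : AddSubgroup (Fin n → ℤ)) (φ : V ≃+ W) (k : ℕ)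
    (x : Fin n → ℚ) : Prop :=
  ∃ p : ℤ, p ≠ 0 ∧ ∃ v : Fin n → ℤ, embQ n v = p • x ∧
    (∃ w, IntRelIter V W φ k v w) ∧ (∃ u, IntRelIter V W φ k u v)

/-- `D_{φ^k}`: the set `D_ψ` associated to the group isomorphism `ψ = φ^k : V_k → W_k`,
namely the `x ∈ (V_k ∩ W_k) ⊗ ℚ` with a full backward orbit under `(φ^k)_ℚ` inside
`(V_k ∩ W_k) ⊗ ℚ`. -/
def DSetPow {n : ℕ} (V W : AddSubgroup (Fin n → ℤ)) (φ : V ≃+ W) (k : ℕ) :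
    Set (Fin n → ℚ) :=
  {x | ∃ xs : ℕ → (Fin n → ℚ), xs 0 = x ∧ (∀ m, memDomQ V W φ k (xs m)) ∧
      ∀ m, RelPowQ V W φ k (xs (m + 1)) (xs m)}

/-- `RelQIter V W φ k x y`: the `k`-th iterate of `φ_ℚ` is defined at `x` and
`φ_ℚ^k (x) = y`; for `x ∈ D_φ` this says precisely `(φ̃)^k (x) = y`. -/
def RelQIter {n : ℕ} (V W : AddSubgroup (Fin n → ℤ)) (φ : V ≃+ W) :
    ℕ → (Fin n → ℚ) → (Fin n → ℚ) → Prop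
  | 0, x, y => x = y
  | (k + 1), x, y => ∃ z, RelQ V W φ x z ∧ RelQIter V W φ k z y

/-!
`RelQ` is the graph of `φ_ℚ`, i.e. the `ℚ`-span of the graph of `φ`; it is single-valued and
injective, and `D_φ` is a subspace of `ℚ^n`. As every point of `D_φ` has a `φ_ℚ`-preimage in
`D_φ`, `φ̃⁻¹` is an injective endomorphism of the finite-dimensional space `D_φ`, hence onto:
`D_φ` is also forward invariant. This turns backward `φ_ℚ`-orbits into backward
`(φ⁻¹)_ℚ`-orbits and provides the forward `k`-step chains needed for `D_φ ⊆ D_{φ^k}`.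
Conversely, the points of the `φ_ℚ`-chains leading into a backward `(φ^k)_ℚ`-orbit each have a
preimage among them, so they lie in `D_φ`.
-/

open Submodule

theorem mem_span_rat_iff_exists_zsmul_mem {E : Type*} [AddCommGroup E] [Module ℚ E]
    (A : AddSubgroup E) {x : E} : x ∈ span ℚ (A : Set E) ↔ ∃ p : ℤ, p ≠ 0 ∧ p • x ∈ A := by
  refine ⟨fun hx => ?_, fun ⟨p, hp, hpx⟩ => ?_⟩
  · induction hx using Submodule.span_induction with
    | mem a ha => exact ⟨1, one_ne_zero, by simpa using ha⟩
    | zero => exact ⟨1, one_ne_zero, by simp⟩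
    | add a b _ _ iha ihb =>
      obtain ⟨p, hp, ha⟩ := iha
      obtain ⟨q, hq, hb⟩ := ihb
      refine ⟨p * q, mul_ne_zero hp hq, ?_⟩
      rw [smul_add, mul_smul, mul_smul, smul_comm p q a]
      exact A.add_mem (A.zsmul_mem ha q) (A.zsmul_mem hb p)
    | smul c a _ ih =>
      obtain ⟨p, hp, ha⟩ := ih
      refine ⟨c.den * p, mul_ne_zero (by exact_mod_cast c.den_ne_zero) hp, ?_⟩
      have hden : (c.den * p : ℤ) • (c • a) = c.num • (p • a) := by
        simp only [← Int.cast_smul_eq_zsmul ℚ, smul_smul]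
        push_cast
        rw [← Rat.den_mul_eq_num c]
        ring_nf
      exact hden ▸ A.zsmul_mem ha _
  · have hx : x = (p : ℚ)⁻¹ • (p • x) := by
      rw [← Int.cast_smul_eq_zsmul ℚ, inv_smul_smul₀ (Int.cast_ne_zero.2 hp)]
    exact hx ▸ smul_mem _ _ (subset_span hpx)

theorem Submodule.exists_mem_graph_of_forall_exists_mem_graph {K E : Type*} [Field K]
    [AddCommGroup E] [Module K E] [FiniteDimensional K E] (G : Submodule K (E × E))
    (D : Submodule K E) (hfun : ∀ y, (0, y) ∈ G → y = 0) (hinj : ∀ x, (x, 0) ∈ G → x = 0)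
    (hpred : ∀ y ∈ D, ∃ x ∈ D, (x, y) ∈ G) : ∀ x ∈ D, ∃ y ∈ D, (x, y) ∈ G := by
  let G' : Submodule K (D × D) := G.comap (D.subtype.prodMap D.subtype)
  let fst' : G' →ₗ[K] D := (LinearMap.fst K D D).comp G'.subtype
  let snd' : G' →ₗ[K] D := (LinearMap.snd K D D).comp G'.subtype
  have hfst : Function.Injective fst' := by
    refine (injective_iff_map_eq_zero fst').2 fun ⟨⟨x, y⟩, hg⟩ hx => ?_
    obtain rfl : x = 0 := hx
    have : y = 0 := Subtype.ext (hfun _ (by simpa [G'] using hg))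
    simp [this]
  have hsnd : Function.Bijective snd' := by
    refine ⟨(injective_iff_map_eq_zero snd').2 fun ⟨⟨x, y⟩, hg⟩ hy => ?_, fun ⟨y, hy⟩ => ?_⟩
    · obtain rfl : y = 0 := hy
      have : x = 0 := Subtype.ext (hinj _ (by simpa [G'] using hg))
      simp [this]
    · obtain ⟨x, hx, hxy⟩ := hpred y hy
      exact ⟨⟨(⟨x, hx⟩, ⟨y, hy⟩), hxy⟩, rfl⟩
  have hfst_surj : Function.Surjective fst' :=
    (LinearMap.injective_iff_surjective_of_finrank_eq_finrank
      (LinearEquiv.ofBijective snd' hsnd).finrank_eq).1 hfst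
  intro x hx
  obtain ⟨⟨⟨x', y⟩, hg⟩, hx'⟩ := hfst_surj ⟨x, hx⟩
  obtain rfl : x' = ⟨x, hx⟩ := hx'
  exact ⟨y, y.2, hg⟩

section Lattice
variable {n : ℕ}

def embQHom (n : ℕ) : (Fin n → ℤ) →+ (Fin n → ℚ) := (Int.castAddHom ℚ).compLeft (Fin n)

@[simp] lemma embQHom_apply (x : Fin n → ℤ) : embQHom n x = embQ n x := rfl

@[simp] lemma embQ_zero : embQ n 0 = 0 := map_zero (embQHom n)

@[simp] lemma embQ_zsmul (c : ℤ) (x : Fin n → ℤ) : embQ n (c • x) = c • embQ n x :=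
  map_zsmul (embQHom n) c x

lemma embQ_injective : Function.Injective (embQ n) := fun _ _ h =>
  funext fun i => Int.cast_injective (congrFun h i)

lemma mem_qSpan_iff {U : AddSubgroup (Fin n → ℤ)} {x : Fin n → ℚ} :
    x ∈ qSpan n U ↔ ∃ p : ℤ, p ≠ 0 ∧ ∃ u ∈ U, embQ n u = p • x := by
  change x ∈ span ℚ (U.map (embQHom n) : Set (Fin n → ℚ)) ↔ _
  simp only [mem_span_rat_iff_exists_zsmul_mem, AddSubgroup.mem_map, embQHom_apply]

lemma qSpan_top : qSpan n ⊤ = ⊤ := by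
  rw [eq_top_iff, ← (Pi.basisFun ℚ (Fin n)).span_eq, span_le]
  rintro _ ⟨i, rfl⟩
  exact subset_span ⟨Pi.single i 1, trivial, by ext j; simp [embQ, Pi.single_apply]⟩

lemma exists_embQ_eq_zsmul (x : Fin n → ℚ) : ∃ p : ℤ, p ≠ 0 ∧ ∃ v, embQ n v = p • x := by
  obtain ⟨p, hp, v, -, hv⟩ := mem_qSpan_iff.1 (qSpan_top (n := n) ▸ mem_top : x ∈ qSpan n ⊤)
  exact ⟨p, hp, v, hv⟩

lemma qSpan_inf (U U' : AddSubgroup (Fin n → ℤ)) : qSpan n (U ⊓ U') = qSpan n U ⊓ qSpan n U' := by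
  ext x
  simp only [mem_inf, mem_qSpan_iff]
  refine ⟨fun ⟨p, hp, u, hu, hux⟩ => ⟨⟨p, hp, u, hu.1, hux⟩, ⟨p, hp, u, hu.2, hux⟩⟩, ?_⟩
  rintro ⟨⟨p, hp, u, hu, hux⟩, ⟨q, hq, u', hu', hux'⟩⟩
  have hqu : q • u = p • u' := embQ_injective (by rw [embQ_zsmul, embQ_zsmul, hux, hux', smul_comm])
  refine ⟨q * p, mul_ne_zero hq hp, q • u, ⟨U.zsmul_mem hu q, hqu ▸ U'.zsmul_mem hu' p⟩, ?_⟩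
  rw [embQ_zsmul, hux, mul_smul]

end Lattice

section RelQ
variable {n : ℕ} {V W : AddSubgroup (Fin n → ℤ)} {φ : V ≃+ W}

def relQGraph (V W : AddSubgroup (Fin n → ℤ)) (φ : V ≃+ W) :
    Submodule ℚ ((Fin n → ℚ) × (Fin n → ℚ)) :=
  span ℚ ((((embQHom n).comp V.subtype).prod
    ((embQHom n).comp (W.subtype.comp φ.toAddMonoidHom))).range : Set _)

lemma relQ_iff_mem_relQGraph {x y : Fin n → ℚ} :
    RelQ V W φ x y ↔ (x, y) ∈ relQGraph V W φ := by
  simp only [relQGraph, mem_span_rat_iff_exists_zsmul_mem, AddMonoidHom.mem_range, RelQ,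
    Prod.smul_mk, Prod.ext_iff]
  rfl

lemma RelQ.sub {x y x' y' : Fin n → ℚ} (h : RelQ V W φ x y) (h' : RelQ V W φ x' y') :
    RelQ V W φ (x - x') (y - y') :=
  relQ_iff_mem_relQGraph.2 (sub_mem (relQ_iff_mem_relQGraph.1 h) (relQ_iff_mem_relQGraph.1 h'))

lemma RelQ.add {x y x' y' : Fin n → ℚ} (h : RelQ V W φ x y) (h' : RelQ V W φ x' y') :
    RelQ V W φ (x + x') (y + y') :=
  relQ_iff_mem_relQGraph.2 (add_mem (relQ_iff_mem_relQGraph.1 h) (relQ_iff_mem_relQGraph.1 h'))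

lemma RelQ.smul {x y : Fin n → ℚ} (c : ℚ) (h : RelQ V W φ x y) : RelQ V W φ (c • x) (c • y) :=
  relQ_iff_mem_relQGraph.2 (smul_mem _ c (relQ_iff_mem_relQGraph.1 h))

lemma relQ_zero : RelQ V W φ 0 0 :=
  relQ_iff_mem_relQGraph.2 (zero_mem _)

lemma relQ_symm_iff {x y : Fin n → ℚ} : RelQ W V φ.symm x y ↔ RelQ V W φ y x :=
  ⟨fun ⟨p, hp, w, hw, hv⟩ => ⟨p, hp, φ.symm w, hv, by rwa [φ.apply_symm_apply]⟩,
    fun ⟨p, hp, v, hv, hw⟩ => ⟨p, hp, φ v, hw, by rwa [φ.symm_apply_apply]⟩⟩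

lemma eq_zero_of_relQ_zero_left {y : Fin n → ℚ} (h : RelQ V W φ 0 y) : y = 0 := by
  obtain ⟨p, hp, v, hv, hw⟩ := h
  obtain rfl : v = 0 :=
    Subtype.ext (embQ_injective (by rw [hv, smul_zero, ZeroMemClass.coe_zero, embQ_zero]))
  rw [map_zero, ZeroMemClass.coe_zero, embQ_zero, eq_comm, smul_eq_zero] at hw
  exact hw.resolve_left hp

lemma eq_zero_of_relQ_zero_right {x : Fin n → ℚ} (h : RelQ V W φ x 0) : x = 0 :=
  eq_zero_of_relQ_zero_left (relQ_symm_iff.2 h)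

lemma RelQ.left_unique {x x' y : Fin n → ℚ} (h : RelQ V W φ x y) (h' : RelQ V W φ x' y) :
    x = x' :=
  sub_eq_zero.1 (eq_zero_of_relQ_zero_right (sub_self y ▸ h.sub h'))

lemma RelQ.mem_qSpan_left {x y : Fin n → ℚ} (h : RelQ V W φ x y) : x ∈ qSpan n V := by
  obtain ⟨p, hp, v, hv, -⟩ := h
  exact mem_qSpan_iff.2 ⟨p, hp, v, v.2, hv⟩

lemma RelQ.mem_qSpan_right {x y : Fin n → ℚ} (h : RelQ V W φ x y) : y ∈ qSpan n W :=
  (relQ_symm_iff.2 h).mem_qSpan_left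

end RelQ

section DSet
variable {n : ℕ} {V W : AddSubgroup (Fin n → ℤ)} {φ : V ≃+ W}

lemma subset_dSet_of_forall_exists_pred {T : Set (Fin n → ℚ)} (hT : T ⊆ qSpan n (V ⊓ W))
    (hpred : ∀ z ∈ T, ∃ z' ∈ T, RelQ V W φ z' z) : T ⊆ DSet V W φ := by
  choose! f hfT hf using hpred
  intro x hx
  have hiter : ∀ i, f^[i] x ∈ T := fun i => by
    induction i with
    | zero => exact hx
    | succ i ih => rw [Function.iterate_succ_apply']; exact hfT _ ih
  refine ⟨fun i => f^[i] x, rfl, fun i => hT (hiter i), fun i => ?_⟩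
  simp only [Function.iterate_succ_apply']
  exact hf _ (hiter i)

lemma dSet_subset_qSpan : DSet V W φ ⊆ qSpan n (V ⊓ W) := by
  rintro _ ⟨xs, rfl, hmem, -⟩
  exact hmem 0

lemma mem_dSet_of_orbit {xs : ℕ → Fin n → ℚ} (hmem : ∀ k, xs k ∈ qSpan n (V ⊓ W))
    (hrel : ∀ k, RelQ V W φ (xs (k + 1)) (xs k)) (i : ℕ) : xs i ∈ DSet V W φ :=
  subset_dSet_of_forall_exists_pred (Set.range_subset_iff.2 hmem)
    (by rintro _ ⟨k, rfl⟩; exact ⟨xs (k + 1), ⟨k + 1, rfl⟩, hrel k⟩) ⟨i, rfl⟩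

lemma exists_pred_mem_dSet {x : Fin n → ℚ} (hx : x ∈ DSet V W φ) :
    ∃ x' ∈ DSet V W φ, RelQ V W φ x' x := by
  obtain ⟨xs, rfl, hmem, hrel⟩ := hx
  exact ⟨xs 1, mem_dSet_of_orbit hmem hrel 1, hrel 0⟩

def dSubmodule (V W : AddSubgroup (Fin n → ℤ)) (φ : V ≃+ W) : Submodule ℚ (Fin n → ℚ) where
  carrier := DSet V W φ
  zero_mem' := ⟨fun _ => 0, rfl, fun _ => zero_mem _, fun _ => relQ_zero⟩
  add_mem' := by
    rintro _ _ ⟨xs, rfl, hxm, hxr⟩ ⟨ys, rfl, hym, hyr⟩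
    exact ⟨xs + ys, rfl, fun k => add_mem (hxm k) (hym k), fun k => (hxr k).add (hyr k)⟩
  smul_mem' := by
    rintro c _ ⟨xs, rfl, hxm, hxr⟩
    exact ⟨c • xs, rfl, fun k => smul_mem _ c (hxm k), fun k => (hxr k).smul c⟩

lemma exists_succ_mem_dSet {x : Fin n → ℚ} (hx : x ∈ DSet V W φ) :
    ∃ y ∈ DSet V W φ, RelQ V W φ x y := by
  simp only [relQ_iff_mem_relQGraph]
  exact (relQGraph V W φ).exists_mem_graph_of_forall_exists_mem_graph (dSubmodule V W φ)
    (fun _ h => eq_zero_of_relQ_zero_left (relQ_iff_mem_relQGraph.2 h))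
    (fun _ h => eq_zero_of_relQ_zero_right (relQ_iff_mem_relQGraph.2 h))
    (fun _ hy => (exists_pred_mem_dSet hy).imp fun _ => And.imp_right relQ_iff_mem_relQGraph.1)
    x hx

lemma dSet_subset_dSet_symm : DSet V W φ ⊆ DSet W V φ.symm := by
  refine subset_dSet_of_forall_exists_pred (inf_comm V W ▸ dSet_subset_qSpan) fun z hz => ?_
  obtain ⟨y, hy, hzy⟩ := exists_succ_mem_dSet hz
  exact ⟨y, hy, relQ_symm_iff.2 hzy⟩

lemma dSet_symm : DSet W V φ.symm = DSet V W φ :=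
  (dSet_subset_dSet_symm.trans (by rw [AddEquiv.symm_symm])).antisymm dSet_subset_dSet_symm

end DSet

section Iterates
variable {n : ℕ} {V W : AddSubgroup (Fin n → ℤ)} {φ : V ≃+ W}

lemma relQIter_add {a b : ℕ} {x z y : Fin n → ℚ} (h₁ : RelQIter V W φ a x z)
    (h₂ : RelQIter V W φ b z y) : RelQIter V W φ (a + b) x y := by
  induction a generalizing x with
  | zero => rw [Nat.zero_add]; exact (h₁ : x = z) ▸ h₂
  | succ a ih =>
    obtain ⟨x₁, hx, h₁⟩ := h₁
    rw [Nat.succ_add]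
    exact ⟨x₁, hx, ih h₁⟩

lemma exists_of_relQIter_add {a b : ℕ} {x y : Fin n → ℚ} (h : RelQIter V W φ (a + b) x y) :
    ∃ z, RelQIter V W φ a x z ∧ RelQIter V W φ b z y := by
  induction a generalizing x with
  | zero => exact ⟨x, rfl, by rwa [Nat.zero_add] at h⟩
  | succ a ih =>
    rw [Nat.succ_add] at h
    obtain ⟨x₁, hx, h⟩ := h
    obtain ⟨z, h₁, h₂⟩ := ih h
    exact ⟨z, ⟨x₁, hx, h₁⟩, h₂⟩

lemma relQIter_one_iff {x y : Fin n → ℚ} : RelQIter V W φ 1 x y ↔ RelQ V W φ x y :=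
  ⟨fun ⟨_, h, hy⟩ => (hy : _ = y) ▸ h, fun h => ⟨y, h, rfl⟩⟩

lemma RelQIter.left_unique {j : ℕ} {x x' y : Fin n → ℚ} (h : RelQIter V W φ j x y)
    (h' : RelQIter V W φ j x' y) : x = x' := by
  induction j generalizing x x' with
  | zero => exact (h : x = y).trans (h' : x' = y).symm
  | succ j ih =>
    obtain ⟨z, hz, h⟩ := h
    obtain ⟨z', hz', h'⟩ := h'
    obtain rfl := ih h h'
    exact hz.left_unique hz'

lemma relQIter_of_orbit {xs : ℕ → Fin n → ℚ} (hrel : ∀ k, RelQ V W φ (xs (k + 1)) (xs k))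
    (i j : ℕ) : RelQIter V W φ j (xs (i + j)) (xs i) := by
  induction j with
  | zero => rfl
  | succ j ih => exact ⟨xs (i + j), hrel (i + j), ih⟩

lemma exists_relQIter_of_mem_dSet {x : Fin n → ℚ} (hx : x ∈ DSet V W φ) (j : ℕ) :
    ∃ y, RelQIter V W φ j x y := by
  induction j generalizing x with
  | zero => exact ⟨x, rfl⟩
  | succ j ih =>
    obtain ⟨x₁, hx₁, hxx₁⟩ := exists_succ_mem_dSet hx
    obtain ⟨y, hy⟩ := ih hx₁
    exact ⟨y, x₁, hxx₁, hy⟩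

lemma IntRel.zsmul {v w : Fin n → ℤ} (c : ℤ) (h : IntRel V W φ v w) :
    IntRel V W φ (c • v) (c • w) := by
  obtain ⟨hv, rfl⟩ := h
  refine ⟨V.zsmul_mem hv c, ?_⟩
  change ((φ (c • ⟨v, hv⟩) : W) : Fin n → ℤ) = _
  rw [map_zsmul, AddSubgroup.coe_zsmul]

lemma IntRelIter.zsmul {k : ℕ} {v w : Fin n → ℤ} (c : ℤ) (h : IntRelIter V W φ k v w) :
    IntRelIter V W φ k (c • v) (c • w) := by
  induction k generalizing v with
  | zero => exact congrArg (c • ·) (h : v = w)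
  | succ k ih =>
    obtain ⟨u, hvu, huw⟩ := h
    exact ⟨c • u, hvu.zsmul c, ih huw⟩

lemma relPowQ_iff_relQIter {k : ℕ} {x y : Fin n → ℚ} :
    RelPowQ V W φ k x y ↔ RelQIter V W φ k x y := by
  induction k generalizing x y with
  | zero =>
    refine ⟨fun ⟨p, hp, v, w, hvw, hv, hw⟩ => ?_, fun hxy => ?_⟩
    · obtain rfl : v = w := hvw
      exact smul_right_injective _ hp (hv.symm.trans hw)
    · obtain ⟨p, hp, v, hv⟩ := exists_embQ_eq_zsmul x
      exact ⟨p, hp, v, v, rfl, hv, (hxy : x = y) ▸ hv⟩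
  | succ k ih =>
    refine ⟨fun ⟨p, hp, v, w, ⟨u, ⟨hv, hvu⟩, huw⟩, hvx, hwy⟩ => ?_, fun ⟨z, hxz, hzy⟩ => ?_⟩
    · have hu : embQ n u = p • ((p : ℚ)⁻¹ • embQ n u) := by
        rw [← Int.cast_smul_eq_zsmul ℚ, smul_inv_smul₀ (Int.cast_ne_zero.2 hp)]
      exact ⟨_, ⟨p, hp, ⟨v, hv⟩, hvx, hvu ▸ hu⟩, ih.1 ⟨p, hp, u, w, huw, hu, hwy⟩⟩
    · obtain ⟨p, hp, v, hvx, hvz⟩ := hxz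
      obtain ⟨q, hq, u, w, huw, huz, hwy⟩ := ih.2 hzy
      have hvu : ((φ (q • v) : W) : Fin n → ℤ) = p • u := embQ_injective (by
        rw [map_zsmul, AddSubgroup.coe_zsmul, embQ_zsmul, embQ_zsmul, hvz, huz, smul_comm])
      refine ⟨q * p, mul_ne_zero hq hp, q • (v : Fin n → ℤ), p • w,
        ⟨p • u, ⟨V.zsmul_mem v.2 q, hvu⟩, huw.zsmul p⟩, ?_, ?_⟩
      · rw [embQ_zsmul, hvx, mul_smul]
      · rw [embQ_zsmul, hwy, mul_comm, mul_smul]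

lemma memDomQ_of_relPowQ {k : ℕ} {u x y : Fin n → ℚ} (hxy : RelPowQ V W φ k x y)
    (hux : RelPowQ V W φ k u x) : memDomQ V W φ k x := by
  obtain ⟨p, hp, v, w, hvw, hvx, -⟩ := hxy
  obtain ⟨q, hq, u', v', hu'v', -, hv'x⟩ := hux
  have hv : q • v = p • v' := embQ_injective (by
    rw [embQ_zsmul, embQ_zsmul, hvx, hv'x, smul_comm])
  exact ⟨q * p, mul_ne_zero hq hp, q • v, by rw [embQ_zsmul, hvx, mul_smul],
    ⟨q • w, hvw.zsmul q⟩, ⟨p • u', hv ▸ hu'v'.zsmul p⟩⟩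

lemma memDomQ.mem_qSpan_left {k : ℕ} {x : Fin n → ℚ} (h : memDomQ V W φ (k + 1) x) :
    x ∈ qSpan n V := by
  obtain ⟨p, hp, v, hvx, ⟨_, _, ⟨hv, -⟩, -⟩, -⟩ := h
  exact mem_qSpan_iff.2 ⟨p, hp, v, hv, hvx⟩

end Iterates

section Powers
variable {n : ℕ} {V W : AddSubgroup (Fin n → ℤ)} {φ : V ≃+ W}

lemma dSet_subset_dSetPow (k : ℕ) : DSet V W φ ⊆ DSetPow V W φ k := by
  rintro _ ⟨xs, rfl, hmem, hrel⟩
  have hstep : ∀ m, RelPowQ V W φ k (xs (k * (m + 1))) (xs (k * m)) := fun m =>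
    relPowQ_iff_relQIter.2 (relQIter_of_orbit hrel (k * m) k)
  refine ⟨fun m => xs (k * m), rfl, fun m => ?_, hstep⟩
  obtain ⟨y, hy⟩ := exists_relQIter_of_mem_dSet (mem_dSet_of_orbit hmem hrel (k * m)) k
  exact memDomQ_of_relPowQ (relPowQ_iff_relQIter.2 hy) (hstep m)

lemma dSetPow_subset_dSet (k : ℕ) : DSetPow V W φ (k + 1) ⊆ DSet V W φ := by
  rintro _ ⟨xs, rfl, hmem, hrel⟩
  have hchain : ∀ m L, RelQIter V W φ (L * (k + 1)) (xs (m + L)) (xs m) := by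
    intro m L
    induction L with
    | zero => rw [Nat.zero_mul]; rfl
    | succ L ih =>
      rw [Nat.succ_mul, Nat.add_comm]
      exact relQIter_add (relPowQ_iff_relQIter.1 (hrel (m + L))) ih
  let T : Set (Fin n → ℚ) := {z | ∃ m j, RelQIter V W φ j z (xs m)}
  have hpred : ∀ z ∈ T, ∃ z' ∈ T, RelQ V W φ z' z := by
    rintro z ⟨m, j, hz⟩
    -- by uniqueness, `z` lies on the chain of length `(j + 1) * (k + 1) > j` ending at `xs m`
    have h := hchain m (j + 1)
    rw [show (j + 1) * (k + 1) = j * k + k + 1 + j by ring] at h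
    obtain ⟨z₁, h₁, hz₁⟩ := exists_of_relQIter_add h
    obtain rfl := hz₁.left_unique hz
    obtain ⟨z', -, hz'z⟩ := exists_of_relQIter_add h₁
    rw [relQIter_one_iff] at hz'z
    exact ⟨z', ⟨m, j + 1, _, hz'z, hz⟩, hz'z⟩
  have hT : T ⊆ qSpan n (V ⊓ W) := by
    intro z hzT
    rw [qSpan_inf]
    refine ⟨?_, (hpred z hzT).elim fun _ h => h.2.mem_qSpan_right⟩
    obtain ⟨m, _ | j, hz⟩ := hzT
    · exact (hz : z = xs m) ▸ (hmem m).mem_qSpan_left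
    · obtain ⟨_, h, -⟩ := hz
      exact h.mem_qSpan_left
  exact subset_dSet_of_forall_exists_pred hT hpred ⟨0, 0, rfl⟩

end Powers

/-- Proposition 7.1(2): for every `k ≥ 1`, `D_{φ^k} = D_φ` and `(φ^k)~ = (φ̃)^k`
(as maps on `D_φ`); moreover `D_{φ^{-1}} = D_φ` and `(φ^{-1})~ = (φ̃)^{-1}`. -/
theorem statement2 (n : ℕ) (V W : AddSubgroup (Fin n → ℤ)) (φ : V ≃+ W)
    (k : ℕ) (hk : 1 ≤ k) :
    (DSetPow V W φ k = DSet V W φ ∧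
      ∀ x y : Fin n → ℚ, x ∈ DSet V W φ →
        (RelPowQ V W φ k x y ↔ RelQIter V W φ k x y)) ∧
    (DSet W V φ.symm = DSet V W φ ∧
      ∀ x y : Fin n → ℚ, x ∈ DSet V W φ →
        (RelQ W V φ.symm x y ↔ RelQ V W φ y x)) := by
  obtain ⟨k, rfl⟩ := Nat.exists_eq_add_of_le' hk
  exact ⟨⟨(dSetPow_subset_dSet k).antisymm (dSet_subset_dSetPow _),
    fun _ _ _ => relPowQ_iff_relQIter⟩, dSet_symm, fun _ _ _ => relQ_symm_iff⟩
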